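/- Let X be a real n×k matrix with XᵀX invertible such that the all-ones vector ι lies in the column space of X, let Z be a nonzero real n-vector with Z^{⊥X} := (I − P_X)Z ≠ 0, let W = [X Z], and let Y be a real n-vector with Yᵀ M⁰ Y ≠ 0. Then R²_{Y∼X+Z} − R²_{Y∼X} − R²_{Y∼Z} = η_{Y,Z,X}, where η_{Y,Z,X} := R²_{Y∼Z^{⊥X}} − R²_{Y∼Z}. -/

import Mathlib

open Matrix

/-- Projection matrix onto the column space of `A`: `P_A = A (Aᵀ A)⁻¹ Aᵀ`. -/
noncomputable def Pmat {n m : ℕ} (A : Matrix (Fin n) (Fin m) ℝ) : Matrix (Fin n) (Fin n) ℝ :=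
  A * (Aᵀ * A)⁻¹ * Aᵀ

/-- Projection matrix onto the span of a single column vector `z`, written with
scalar division: `P_z = z zᵀ / (zᵀ z)`. -/
noncomputable def Pvec {n : ℕ} (z : Matrix (Fin n) (Fin 1) ℝ) : Matrix (Fin n) (Fin n) ℝ :=
  ((zᵀ * z) 0 0)⁻¹ • (z * zᵀ)

/-- The deviation-from-means matrix `M⁰ = I - (1/n) ι ιᵀ`. -/
noncomputable def M0 (n : ℕ) : Matrix (Fin n) (Fin n) ℝ :=
  (1 : Matrix (Fin n) (Fin n) ℝ) - (n : ℝ)⁻¹ • Matrix.of (fun _ _ => (1 : ℝ))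

/-- The augmented matrix `W = [X Z]` obtained by appending the column `Z` to `X`. -/
noncomputable def appendCol {n k : ℕ} (X : Matrix (Fin n) (Fin k) ℝ)
    (Z : Matrix (Fin n) (Fin 1) ℝ) : Matrix (Fin n) (Fin (k + 1)) ℝ :=
  Matrix.of fun i => Fin.snoc (X i) (Z i 0)

/-- Total R² of a regression of `Y` on regressors with projection matrix `P`:
`R² = (Yᵀ P M⁰ P Y)/(Yᵀ M⁰ Y)`. -/
noncomputable def totalR2 {n : ℕ} (Y : Matrix (Fin n) (Fin 1) ℝ)
    (P : Matrix (Fin n) (Fin n) ℝ) : ℝ :=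
  (Yᵀ * P * M0 n * P * Y) 0 0 / (Yᵀ * M0 n * Y) 0 0

section Aux

variable {n k : ℕ}

lemma Pmat_transpose (A : Matrix (Fin n) (Fin k) ℝ) : (Pmat A)ᵀ = Pmat A := by
  simp only [Pmat, Matrix.transpose_mul, Matrix.transpose_transpose,
    Matrix.transpose_nonsing_inv, Matrix.mul_assoc]

lemma Pvec_transpose (z : Matrix (Fin n) (Fin 1) ℝ) : (Pvec z)ᵀ = Pvec z := by
  simp only [Pvec, Matrix.transpose_smul, Matrix.transpose_mul, Matrix.transpose_transpose]

lemma M0_transpose (n : ℕ) : (M0 n)ᵀ = M0 n := by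
  simp only [M0, Matrix.transpose_sub, Matrix.transpose_one, Matrix.transpose_smul]
  congr 1

lemma mul_appendCol (M : Matrix (Fin n) (Fin n) ℝ) (X : Matrix (Fin n) (Fin k) ℝ)
    (Z : Matrix (Fin n) (Fin 1) ℝ) :
    M * appendCol X Z = appendCol (M * X) (M * Z) := by
  ext i j
  induction j using Fin.lastCases with
  | last => simp [appendCol, Matrix.mul_apply]
  | cast j => simp [appendCol, Matrix.mul_apply]

/-- multiplication by a 1×1 matrix on the right is scalar multiplication -/
lemma mul_one_by_one (M : Matrix (Fin n) (Fin 1) ℝ) (N : Matrix (Fin 1) (Fin 1) ℝ) :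
    M * N = (N 0 0) • M := by
  ext i j
  rw [Matrix.mul_apply, Fin.sum_univ_one]
  rw [Fin.fin_one_eq_zero j]
  simp [mul_comm]

lemma colmat_ne_zero {Zp : Matrix (Fin n) (Fin 1) ℝ} (h : Zp ≠ 0) : ∃ i, Zp i 0 ≠ 0 := by
  by_contra hc
  push_neg at hc
  exact h (by ext i j; rw [Fin.fin_one_eq_zero j]; simp [hc i])

lemma sq_sum_ne_zero {Zp : Matrix (Fin n) (Fin 1) ℝ} (h : Zp ≠ 0) :
    (Zpᵀ * Zp) 0 0 ≠ 0 := by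
  obtain ⟨i, hi⟩ := colmat_ne_zero h
  have : (Zpᵀ * Zp) 0 0 = ∑ i, Zp i 0 * Zp i 0 := by
    simp [Matrix.mul_apply]
  rw [this]
  have hpos : 0 < ∑ i, Zp i 0 * Zp i 0 := by
    apply Finset.sum_pos' (fun j _ => mul_self_nonneg _)
    exact ⟨i, Finset.mem_univ i, mul_self_pos.mpr hi⟩
  exact ne_of_gt hpos

end Aux

section Main

variable {n k : ℕ} (X : Matrix (Fin n) (Fin k) ℝ) (Z : Matrix (Fin n) (Fin 1) ℝ)

lemma Pmat_mul_self (hX : IsUnit (Xᵀ * X)) : Pmat X * X = X := by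
  have hd : IsUnit (Xᵀ * X).det := (Matrix.isUnit_iff_isUnit_det _).mp hX
  rw [Pmat, Matrix.mul_assoc, Matrix.mul_assoc, Matrix.nonsing_inv_mul _ hd, Matrix.mul_one]

lemma Zp_t_mul_X (hX : IsUnit (Xᵀ * X)) : (Z - Pmat X * Z)ᵀ * X = 0 := by
  rw [Matrix.transpose_sub, Matrix.sub_mul, Matrix.transpose_mul, Pmat_transpose,
    Matrix.mul_assoc, Pmat_mul_self X hX, sub_self]

lemma t_mul_Pmat {V : Matrix (Fin n) (Fin 1) ℝ} (h : Vᵀ * X = 0) : Vᵀ * Pmat X = 0 := by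
  rw [Pmat, ← Matrix.mul_assoc, ← Matrix.mul_assoc, h, Matrix.zero_mul, Matrix.zero_mul]

lemma Zp_t_mul_Pmat (hX : IsUnit (Xᵀ * X)) : (Z - Pmat X * Z)ᵀ * Pmat X = 0 :=
  t_mul_Pmat X (Zp_t_mul_X X Z hX)

end Main

section Main2

variable {n k : ℕ} (X : Matrix (Fin n) (Fin k) ℝ) (Z : Matrix (Fin n) (Fin 1) ℝ)

lemma t_mul_M0 {V : Matrix (Fin n) (Fin 1) ℝ}
    (hiota : ∃ v : Fin k → ℝ, X *ᵥ v = fun _ => (1 : ℝ)) (h : Vᵀ * X = 0) :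
    Vᵀ * M0 n = Vᵀ := by
  obtain ⟨v, hv⟩ := hiota
  have hsum : ∀ a : Fin 1, ∑ i, V i a = 0 := by
    intro a
    have h1 : ∀ i, (1 : ℝ) = ∑ j, X i j * v j := by
      intro i
      have := congrFun hv i
      simp only [Matrix.mulVec, dotProduct] at this
      exact this.symm
    calc ∑ i, V i a = ∑ i, V i a * (∑ j, X i j * v j) := by
          refine Finset.sum_congr rfl fun i _ => ?_
          rw [← h1 i, mul_one]
      _ = ∑ i, ∑ j, V i a * X i j * v j := by
          refine Finset.sum_congr rfl fun i _ => ?_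
          rw [Finset.mul_sum]; exact Finset.sum_congr rfl fun j _ => (mul_assoc _ _ _).symm
      _ = ∑ j, (∑ i, V i a * X i j) * v j := by
          rw [Finset.sum_comm]
          exact Finset.sum_congr rfl fun j _ => (Finset.sum_mul _ _ _).symm
      _ = 0 := by
          refine Finset.sum_eq_zero fun j _ => ?_
          have : (Vᵀ * X) a j = 0 := by rw [h]; rfl
          rw [Matrix.mul_apply] at this
          simp only [Matrix.transpose_apply] at this
          rw [this, zero_mul]
  have hJ : Vᵀ * (Matrix.of (fun _ _ => (1 : ℝ)) : Matrix (Fin n) (Fin n) ℝ) = 0 := by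
    ext a j
    rw [Matrix.mul_apply]
    simpa using hsum a
  rw [M0, Matrix.mul_sub, Matrix.mul_one, Matrix.mul_smul, hJ, smul_zero, sub_zero]

lemma Pvec_mul_of_t (V U : Matrix (Fin n) (Fin 1) ℝ) :
    Pvec V * U = ((Vᵀ * V) 0 0)⁻¹ • (V * (Vᵀ * U)) := by
  rw [Pvec, Matrix.smul_mul, Matrix.mul_assoc]

lemma Pvec_Zp_mul_Z (hX : IsUnit (Xᵀ * X)) (hZp : Z - Pmat X * Z ≠ 0) :
    Pvec (Z - Pmat X * Z) * Z = Z - Pmat X * Z := by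
  set Zp := Z - Pmat X * Z with hZpdef
  have h1 : Zpᵀ * Z = Zpᵀ * Zp := by
    have : Zpᵀ * Z - Zpᵀ * Zp = Zpᵀ * (Pmat X * Z) := by
      rw [← Matrix.mul_sub, hZpdef]; congr 1; abel
    have h2 : Zpᵀ * (Pmat X * Z) = 0 := by
      rw [← Matrix.mul_assoc, Zp_t_mul_Pmat X Z hX, Matrix.zero_mul]
    have := this.trans h2
    linear_combination (norm := module) this
  rw [Pvec_mul_of_t, h1, mul_one_by_one, smul_smul,
    inv_mul_cancel₀ (sq_sum_ne_zero hZp), one_smul]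

lemma Pvec_Zp_mul_X (hX : IsUnit (Xᵀ * X)) :
    Pvec (Z - Pmat X * Z) * X = 0 := by
  rw [Pvec, Matrix.smul_mul, Matrix.mul_assoc, Zp_t_mul_X X Z hX, Matrix.mul_zero, smul_zero]

lemma Pvec_Zp_mul_Pmat (hX : IsUnit (Xᵀ * X)) :
    Pvec (Z - Pmat X * Z) * Pmat X = 0 := by
  rw [Pvec, Matrix.smul_mul, Matrix.mul_assoc, Zp_t_mul_Pmat X Z hX, Matrix.mul_zero, smul_zero]

end Main2

section Main3

variable {n k : ℕ} (X : Matrix (Fin n) (Fin k) ℝ) (Z : Matrix (Fin n) (Fin 1) ℝ)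

lemma appendCol_mulVec (v : Fin (k+1) → ℝ) :
    appendCol X Z *ᵥ v =
      X *ᵥ (fun j => v j.castSucc) + v (Fin.last k) • (fun i => Z i 0) := by
  funext i
  simp only [Matrix.mulVec, dotProduct, appendCol, Matrix.of_apply,
    Pi.add_apply, Pi.smul_apply, smul_eq_mul]
  rw [Fin.sum_univ_castSucc]
  simp [mul_comm]

lemma W_det_unit (hX : IsUnit (Xᵀ * X)) (hZp : Z - Pmat X * Z ≠ 0) :
    IsUnit ((appendCol X Z)ᵀ * appendCol X Z) := by
  set W := appendCol X Z
  rw [Matrix.isUnit_iff_isUnit_det, isUnit_iff_ne_zero]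
  intro hdet
  obtain ⟨v, hv0, hv⟩ := (Matrix.exists_mulVec_eq_zero_iff).mpr hdet
  -- W *ᵥ v = 0
  have hWv : W *ᵥ v = 0 := by
    have h1 : v ⬝ᵥ ((Wᵀ * W) *ᵥ v) = 0 := by rw [hv, dotProduct_zero]
    rw [← Matrix.mulVec_mulVec, Matrix.dotProduct_mulVec, Matrix.vecMul_transpose] at h1
    exact dotProduct_self_eq_zero.mp h1
  rw [appendCol_mulVec] at hWv
  -- multiply by (1 - Pmat X)
  have h2 : (1 - Pmat X) *ᵥ (X *ᵥ (fun j => v j.castSucc)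
      + v (Fin.last k) • (fun i => Z i 0)) = 0 := by
    rw [hWv, Matrix.mulVec_zero]
  rw [Matrix.mulVec_add, Matrix.mulVec_smul, Matrix.mulVec_mulVec,
    Matrix.sub_mul, Matrix.one_mul, Pmat_mul_self X hX, sub_self,
    Matrix.zero_mulVec, zero_add] at h2
  have h3 : ((1 - Pmat X) *ᵥ fun i => Z i 0) = fun i => (Z - Pmat X * Z) i 0 := by
    funext i
    simp [Matrix.mulVec, dotProduct, Matrix.mul_apply, Matrix.sub_apply,
      Matrix.one_apply, Finset.sum_sub_distrib, sub_mul, ite_mul]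
  rw [h3] at h2
  have hlast : v (Fin.last k) = 0 := by
    by_contra hc
    apply hZp
    ext i j
    rw [Fin.fin_one_eq_zero j]
    have := congrFun h2 i
    simp only [Pi.smul_apply, smul_eq_mul, Pi.zero_apply] at this
    have := (mul_eq_zero.mp this).resolve_left hc
    simpa using this
  have hXu : X *ᵥ (fun j => v j.castSucc) = 0 := by
    rw [hlast, zero_smul, add_zero] at hWv
    exact hWv
  have hu : (fun j => v j.castSucc) = (0 : Fin k → ℝ) := by
    have h4 : (Xᵀ * X) *ᵥ (fun j => v j.castSucc) = 0 := by
      rw [← Matrix.mulVec_mulVec, hXu, Matrix.mulVec_zero]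
    have hd : IsUnit (Xᵀ * X).det := (Matrix.isUnit_iff_isUnit_det _).mp hX
    calc (fun j => v j.castSucc) = ((Xᵀ * X)⁻¹ * (Xᵀ * X)) *ᵥ (fun j => v j.castSucc) := by
          rw [Matrix.nonsing_inv_mul _ hd, Matrix.one_mulVec]
      _ = 0 := by rw [← Matrix.mulVec_mulVec, h4, Matrix.mulVec_zero]
  apply hv0
  funext j
  induction j using Fin.lastCases with
  | last => exact hlast
  | cast j => exact congrFun hu j

lemma mul_Pmat_of {m : ℕ} (A : Matrix (Fin n) (Fin m) ℝ) {M : Matrix (Fin n) (Fin n) ℝ}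
    (h : M * A = A) : M * Pmat A = Pmat A := by
  rw [Pmat, ← Matrix.mul_assoc, ← Matrix.mul_assoc, h]

lemma Pmat_W_eq (hX : IsUnit (Xᵀ * X)) (hZp : Z - Pmat X * Z ≠ 0) :
    Pmat (appendCol X Z) = Pmat X + Pvec (Z - Pmat X * Z) := by
  set W := appendCol X Z with hW
  set Q := Pmat X + Pvec (Z - Pmat X * Z) with hQ
  have hWu := W_det_unit X Z hX hZp
  have hWd : IsUnit (Wᵀ * W).det := (Matrix.isUnit_iff_isUnit_det _).mp hWu
  have hPWW : Pmat W * W = W := Pmat_mul_self W hWu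
  have hPWX : Pmat W * X = X := by
    have h0 := hPWW
    rw [hW, mul_appendCol] at h0
    ext i j
    have h := congrFun (congrFun (congrArg (fun M => (M : Matrix _ _ ℝ)) h0) i) j.castSucc
    simpa [hW, appendCol, Fin.snoc_castSucc] using h
  have hPWZ : Pmat W * Z = Z := by
    have h0 := hPWW
    rw [hW, mul_appendCol] at h0
    ext i j
    rw [Fin.fin_one_eq_zero j]
    have h := congrFun (congrFun (congrArg (fun M => (M : Matrix _ _ ℝ)) h0) i) (Fin.last k)
    simpa [hW, appendCol, Fin.snoc_last] using h
  -- Q * W = W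
  have hQX : Q * X = X := by
    rw [hQ, Matrix.add_mul, Pmat_mul_self X hX, Pvec_Zp_mul_X X Z hX, add_zero]
  have hQZ : Q * Z = Z := by
    rw [hQ, Matrix.add_mul, Pvec_Zp_mul_Z X Z hX hZp]
    abel
  have hQW : Q * W = W := by
    rw [hW, mul_appendCol, hQX, hQZ]
  -- Q * Pmat W = Pmat W
  have h1 : Q * Pmat W = Pmat W := mul_Pmat_of W hQW
  -- Pmat W * Q = Q
  have hPWPX : Pmat W * Pmat X = Pmat X := mul_Pmat_of X hPWX
  have hPWZp : Pmat W * (Z - Pmat X * Z) = Z - Pmat X * Z := by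
    rw [Matrix.mul_sub, hPWZ, ← Matrix.mul_assoc, hPWPX]
  have h2 : Pmat W * Q = Q := by
    rw [hQ, Matrix.mul_add, hPWPX]
    congr 1
    rw [Pvec, Matrix.mul_smul, ← Matrix.mul_assoc, hPWZp]
  -- symmetry
  have hsym : Q = Pmat W := by
    calc Q = Qᵀ := by rw [hQ, Matrix.transpose_add, Pmat_transpose, Pvec_transpose]
      _ = (Pmat W * Q)ᵀ := by rw [h2]
      _ = Qᵀ * (Pmat W)ᵀ := by rw [Matrix.transpose_mul]
      _ = Q * Pmat W := by rw [Pmat_transpose, hQ, Matrix.transpose_add,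
            Pmat_transpose, Pvec_transpose]
      _ = Pmat W := h1
  exact hsym.symm

end Main3

section Final

variable {n k : ℕ} (X : Matrix (Fin n) (Fin k) ℝ) (Z : Matrix (Fin n) (Fin 1) ℝ)

lemma Pvec_Zp_mul_M0 (hX : IsUnit (Xᵀ * X))
    (hiota : ∃ v : Fin k → ℝ, X *ᵥ v = fun _ => (1 : ℝ)) :
    Pvec (Z - Pmat X * Z) * M0 n = Pvec (Z - Pmat X * Z) := by
  rw [Pvec, Matrix.smul_mul, Matrix.mul_assoc, t_mul_M0 X hiota (Zp_t_mul_X X Z hX)]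

lemma cross1 (hX : IsUnit (Xᵀ * X))
    (hiota : ∃ v : Fin k → ℝ, X *ᵥ v = fun _ => (1 : ℝ)) :
    Pvec (Z - Pmat X * Z) * M0 n * Pmat X = 0 := by
  rw [Pvec_Zp_mul_M0 X Z hX hiota, Pvec_Zp_mul_Pmat X Z hX]

lemma cross2 (hX : IsUnit (Xᵀ * X))
    (hiota : ∃ v : Fin k → ℝ, X *ᵥ v = fun _ => (1 : ℝ)) :
    Pmat X * M0 n * Pvec (Z - Pmat X * Z) = 0 := by
  have h := congrArg Matrix.transpose (cross1 X Z hX hiota)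
  rw [Matrix.transpose_mul, Matrix.transpose_mul, Pmat_transpose, Pvec_transpose,
    M0_transpose, Matrix.transpose_zero, ← Matrix.mul_assoc] at h
  exact h

theorem R2_decomp_eta' (Y : Matrix (Fin n) (Fin 1) ℝ)
    (hX : IsUnit (Xᵀ * X))
    (hiota : ∃ v : Fin k → ℝ, X *ᵥ v = fun _ => (1 : ℝ))
    (hZ : Z ≠ 0)
    (hZperp : Z - Pmat X * Z ≠ 0)
    (hY : (Yᵀ * M0 n * Y) 0 0 ≠ 0) :
    totalR2 Y (Pmat (appendCol X Z)) - totalR2 Y (Pmat X) - totalR2 Y (Pmat Z) =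
      totalR2 Y (Pvec (Z - Pmat X * Z)) - totalR2 Y (Pmat Z) := by
  set Zp := Z - Pmat X * Z with hZpdef
  have key := Pmat_W_eq X Z hX hZperp
  have e1 : Yᵀ * Pmat X * M0 n * Pvec Zp * Y = 0 := by
    have h : Yᵀ * Pmat X * M0 n * Pvec Zp = Yᵀ * (Pmat X * M0 n * Pvec Zp) := by
      simp only [Matrix.mul_assoc]
    rw [h, cross2 X Z hX hiota, Matrix.mul_zero, Matrix.zero_mul]
  have e2 : Yᵀ * Pvec Zp * M0 n * Pmat X * Y = 0 := by
    have h : Yᵀ * Pvec Zp * M0 n * Pmat X = Yᵀ * (Pvec Zp * M0 n * Pmat X) := by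
      simp only [Matrix.mul_assoc]
    rw [h, cross1 X Z hX hiota, Matrix.mul_zero, Matrix.zero_mul]
  have expand : Yᵀ * Pmat (appendCol X Z) * M0 n * Pmat (appendCol X Z) * Y =
      Yᵀ * Pmat X * M0 n * Pmat X * Y + Yᵀ * Pvec Zp * M0 n * Pvec Zp * Y := by
    rw [key]
    simp only [Matrix.mul_add, Matrix.add_mul]
    rw [e1, e2]
    abel
  simp only [totalR2, expand, Matrix.add_apply]
  rw [add_div]
  ring
end Final

/-- `R²_{Y∼X+Z} − R²_{Y∼X} − R²_{Y∼Z} = η_{Y,Z,X}` where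
`η_{Y,Z,X} = R²_{Y∼Z^{⊥X}} − R²_{Y∼Z}`. -/
theorem R2_decomp_eta {n k : ℕ} (X : Matrix (Fin n) (Fin k) ℝ)
    (Z Y : Matrix (Fin n) (Fin 1) ℝ)
    (hX : IsUnit (Xᵀ * X))
    (hiota : ∃ v : Fin k → ℝ, X *ᵥ v = fun _ => (1 : ℝ))
    (hZ : Z ≠ 0)
    (hZperp : Z - Pmat X * Z ≠ 0)
    (hY : (Yᵀ * M0 n * Y) 0 0 ≠ 0) :
    totalR2 Y (Pmat (appendCol X Z)) - totalR2 Y (Pmat X) - totalR2 Y (Pmat Z) =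
      totalR2 Y (Pvec (Z - Pmat X * Z)) - totalR2 Y (Pmat Z) :=
  R2_decomp_eta' X Z Y hX hiota hZ hZperp hY
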